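/- Let E be the exterior algebra over ℂ on generators e₁,…,e₆ and let T = {{1,2,3},{3,4,5},{1,4,6},{2,5,6}} (the triangles of the signed graph G∘). Then the span of the 12 elements e_t ∧ ∂e_S for S ∈ T and t ∈ [6]∖S has dimension 10 inside E³. -/

import Mathlib

open ExteriorAlgebra

/-- The standard generator `e i` of the exterior algebra `Λ(ℂ⁶)`. -/
noncomputable def gen (i : Fin 6) : ExteriorAlgebra ℂ (Fin 6 → ℂ) :=
  ι ℂ (Pi.single i (1 : ℂ))

/-- `∂e_{ijk} = e_j ∧ e_k - e_i ∧ e_k + e_i ∧ e_j`. -/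
noncomputable def bdry (i j k : Fin 6) : ExteriorAlgebra ℂ (Fin 6 → ℂ) :=
  gen j * gen k - gen i * gen k + gen i * gen j

/-- The triangles of the signed graph `G∘` (edges 1,…,6 relabelled 0,…,5):
`{1,2,3}, {3,4,5}, {1,4,6}, {2,5,6}`. -/
def triangles : List (Fin 6 × Fin 6 × Fin 6) := [(0, 1, 2), (2, 3, 4), (0, 3, 5), (1, 4, 5)]

/-!
Of the twelve generators `e_t ∧ ∂e_S`, the two with `S = {1,4,5}` and `t ∈ {2,3}` (indices from 0)
are explicit linear combinations of the other ten. Those ten are linearly independent: pairing a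
vanishing combination of them with ten coordinate functionals of `Λ³`, each a `3 × 3` minor, gives
a triangular linear system forcing all coefficients to vanish.
-/

theorem finrank_span_eq_card_of_range_subset {K M ι : Type*} [DivisionRing K] [AddCommGroup M]
    [Module K M] [Fintype ι] {s : Set M} {v : ι → M} (hv : LinearIndependent K v)
    (hvs : Set.range v ⊆ s) (hs : s ⊆ Submodule.span K (Set.range v)) :
    Module.finrank K (Submodule.span K s) = Fintype.card ι := by
  rw [Submodule.span_eq_span hs (hvs.trans Submodule.subset_span), finrank_span_eq_card hv]

/-- For strictly increasing `s`, the coefficient of `e_{s 0} ∧ ⋯ ∧ e_{s (n-1)}` in the monomial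
basis of `Λ(ι → R)`. -/
noncomputable def minorCoeff {R ι : Type*} [CommRing R] {n : ℕ} (s : Fin n → ι) :
    ExteriorAlgebra R (ι → R) →ₗ[R] R :=
  liftAlternating (Pi.single n (Matrix.detRowAlternating.compLinearMap (LinearMap.funLeft R R s)))

theorem minorCoeff_ιMulti {R ι : Type*} [CommRing R] {n : ℕ} (s : Fin n → ι)
    (v : Fin n → ι → R) :
    minorCoeff s (ιMulti R n v) = (Matrix.of fun i j => v i (s j)).det := by
  rw [minorCoeff, liftAlternating_apply_ιMulti, Pi.single_eq_same]
  rfl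

theorem gen_mul_gen_comm (i j : Fin 6) : gen i * gen j = -(gen j * gen i) :=
  eq_neg_of_add_eq_zero_left (ι_add_mul_swap _ _)

theorem gen_mul_gen_mul_gen (a b c : Fin 6) :
    gen a * gen b * gen c = ιMulti ℂ 3 ![Pi.single a 1, Pi.single b 1, Pi.single c 1] := by
  simp [gen, ιMulti_apply, mul_assoc]

theorem minorCoeff_gen_mul_gen_mul_gen (s : Fin 3 → Fin 6) (a b c : Fin 6) :
    minorCoeff s (gen a * (gen b * gen c)) =
      (Matrix.of fun i j => if ![a, b, c] i = s j then (1 : ℂ) else 0).det := by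
  rw [← mul_assoc, gen_mul_gen_mul_gen, minorCoeff_ιMulti]
  congr 1
  ext i j
  fin_cases i <;> simp [Pi.single_apply, eq_comm]

def f3Generators : Set (ExteriorAlgebra ℂ (Fin 6 → ℂ)) :=
  {x | ∃ p ∈ triangles, ∃ t : Fin 6, t ∉ ({p.1, p.2.1, p.2.2} : Finset (Fin 6)) ∧
    x = gen t * bdry p.1 p.2.1 p.2.2}

noncomputable def f3Basis : Fin 10 → ExteriorAlgebra ℂ (Fin 6 → ℂ) :=
  ![gen 3 * bdry 0 1 2, gen 4 * bdry 0 1 2, gen 5 * bdry 0 1 2,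
    gen 0 * bdry 2 3 4, gen 1 * bdry 2 3 4, gen 5 * bdry 2 3 4,
    gen 1 * bdry 0 3 5, gen 2 * bdry 0 3 5, gen 4 * bdry 0 3 5,
    gen 0 * bdry 1 4 5]

theorem range_f3Basis_subset : Set.range f3Basis ⊆ f3Generators := by
  rintro _ ⟨i, rfl⟩
  fin_cases i <;> simp [f3Generators, f3Basis, triangles, Fin.exists_fin_succ]

theorem gen_mul_bdry_145_mem_span {t : Fin 6} (ht : t = 2 ∨ t = 3) :
    gen t * bdry 1 4 5 ∈ Submodule.span ℂ (Set.range f3Basis) := by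
  -- `j < i` only orients the rewriting, towards monomials with increasing indices.
  have swap : ∀ i j : Fin 6, j < i → gen i * gen j = -(gen j * gen i) :=
    fun i j _ => gen_mul_gen_comm i j
  have swap' : ∀ i j : Fin 6, j < i → ∀ x, gen i * (gen j * x) = -(gen j * (gen i * x)) :=
    fun i j hij x => by rw [← mul_assoc, swap i j hij, neg_mul, mul_assoc]
  rw [Submodule.mem_span_range_iff_exists_fun]
  rcases ht with rfl | rfl <;>
    [refine ⟨![0, -1, 1, 1, 0, -1, 0, 1, -1, 1], ?_⟩;
     refine ⟨![1, -1, 0, 1, -1, 0, 1, 0, -1, 1], ?_⟩] <;>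
    simp (disch := decide) only [Fin.sum_univ_succ, Fin.sum_univ_zero, f3Basis,
      Matrix.cons_val_zero, Matrix.cons_val_succ, bdry, mul_add, mul_sub, swap, swap', mul_neg] <;>
    module

theorem linearIndependent_f3Basis : LinearIndependent ℂ f3Basis := by
  rw [Fintype.linearIndependent_iff]
  intro g hg
  have eqn (s : Fin 3 → Fin 6) : ∑ i, g i * minorCoeff s (f3Basis i) = 0 := by
    simpa using congrArg (minorCoeff s) hg
  have h1 := eqn ![0, 1, 3]
  have h2 := eqn ![0, 1, 4]
  have h3 := eqn ![0, 1, 5]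
  have h4 := eqn ![0, 2, 3]
  have h5 := eqn ![0, 3, 4]
  have h6 := eqn ![1, 2, 5]
  have h7 := eqn ![1, 3, 4]
  have h8 := eqn ![1, 3, 5]
  have h9 := eqn ![2, 3, 5]
  have h10 := eqn ![2, 4, 5]
  simp only [Fin.sum_univ_succ, Fin.sum_univ_zero, f3Basis, Matrix.cons_val_zero,
    Matrix.cons_val_succ, bdry, mul_add, mul_sub, map_add, map_sub,
    minorCoeff_gen_mul_gen_mul_gen] at h1 h2 h3 h4 h5 h6 h7 h8 h9 h10
  simp only [Matrix.det_fin_three, Matrix.of_apply, Matrix.cons_val, Fin.reduceEq, ↓reduceIte,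
    Fin.succ_zero_eq_one, Fin.reduceSucc, mul_one, mul_neg, mul_zero, neg_neg, sub_self, add_zero,
    zero_add, sub_zero, zero_sub] at h1 h2 h3 h4 h5 h6 h7 h8 h9 h10
  intro i
  fin_cases i <;> grind

theorem f3Generators_subset_span : f3Generators ⊆ Submodule.span ℂ (Set.range f3Basis) := by
  rintro _ ⟨p, hp, t, ht, rfl⟩
  simp only [triangles, List.mem_cons, List.not_mem_nil, or_false] at hp
  have basis_mem (i : Fin 10) : f3Basis i ∈ Submodule.span ℂ (Set.range f3Basis) :=
    Submodule.subset_span ⟨i, rfl⟩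
  rcases hp with rfl | rfl | rfl | rfl <;> fin_cases t <;> try exact absurd (by decide) ht
  exacts [basis_mem 0, basis_mem 1, basis_mem 2, basis_mem 3, basis_mem 4, basis_mem 5,
    basis_mem 6, basis_mem 7, basis_mem 8, basis_mem 9,
    gen_mul_bdry_145_mem_span (.inl rfl), gen_mul_bdry_145_mem_span (.inr rfl)]

/-- For the signed graph `G∘`, the span of the 12 elements `e_t ∧ ∂e_S`, for `S` a triangle
of `G∘` and `t ∉ S`, has dimension `10` inside `E³`. -/
theorem dim_span_F3_Gcirc :
    Module.finrank ℂ (Submodule.span ℂ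
      {x : ExteriorAlgebra ℂ (Fin 6 → ℂ) |
        ∃ p ∈ triangles, ∃ t : Fin 6, t ∉ ({p.1, p.2.1, p.2.2} : Finset (Fin 6)) ∧
          x = gen t * bdry p.1 p.2.1 p.2.2}) = 10 :=
  (finrank_span_eq_card_of_range_subset linearIndependent_f3Basis range_f3Basis_subset
    f3Generators_subset_span).trans (Fintype.card_fin 10)
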